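/- Main confidence-set lemma: Suppose confidence intervals C_{a,a'} ⊆ ℝ contain the true utilities, i.e., u_m(w) ∈ C_{m,w} and u_w(m) ∈ C_{w,m} for all (m,w) ∈ M × W, and let u^UCB(a,a') = max C_{a,a'}. If (X, τ) is stable with respect to u^UCB (with zero-sum transfers), then the Subset Instability of (X, τ) with respect to the true utilities u satisfies I(u, X, τ, A) ≤ Σ_{a∈A, μ_X(a)≠a} (max C_{a,μ_X(a)} − min C_{a,μ_X(a)}). -/

import Mathlib

/-!
For a coalition `S` and any matching `μ'` on `S`, the true value of `μ'` is at most its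
upper-confidence value, since true utilities lie in their confidence sets; by stability with
respect to the upper confidence bounds, that is at most what `S` receives under `(μ, τ)`
measured in upper confidence bounds; and for a matched agent the upper confidence bound
exceeds the true utility by at most the width of its confidence set.
-/

open Finset

/-- A two-sided market: agents `A` partitioned into customers `M` and providers `W`. -/
structure TwoSidedMarket (A : Type*) [Fintype A] [DecidableEq A] where
  M : Finset A
  W : Finset A
  disj : Disjoint M W
  cover : M ∪ W = Finset.univ

variable {A : Type*} [Fintype A] [DecidableEq A]

/-- `μ` is (the partner map of) a matching on the subset `S` of agents:
it is an involution, agents outside `S` are unmatched, and matched pairs cross sides. -/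
def IsMatchingOn (Mkt : TwoSidedMarket A) (S : Finset A) (μ : A → A) : Prop :=
  (∀ a, μ (μ a) = a) ∧ (∀ a, μ a ≠ a → a ∈ S) ∧
  (∀ a, μ a ≠ a → (a ∈ Mkt.M ∧ μ a ∈ Mkt.W) ∨ (a ∈ Mkt.W ∧ μ a ∈ Mkt.M))

/-- Transfers `τ` are zero-sum for the matching `μ`. -/
def ZeroSum (μ : A → A) (τ : A → ℝ) : Prop :=
  (∀ a, μ a ≠ a → τ a + τ (μ a) = 0) ∧ (∀ a, μ a = a → τ a = 0)

/-- Stability of the market outcome `(μ, τ)` with respect to utilities `u`: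
individual rationality and no blocking pairs. -/
def Stable (Mkt : TwoSidedMarket A) (u : A → A → ℝ) (μ : A → A) (τ : A → ℝ) : Prop :=
  (∀ a, 0 ≤ u a (μ a) + τ a) ∧
  (∀ m ∈ Mkt.M, ∀ w ∈ Mkt.W,
    u m w + u w m ≤ (u m (μ m) + τ m) + (u w (μ w) + τ w))

/-- Maximum total utility of a matching on the subset `S`. -/
noncomputable def maxWeight (Mkt : TwoSidedMarket A) (u : A → A → ℝ) (S : Finset A) : ℝ :=
  sSup {x | ∃ μ, IsMatchingOn Mkt S μ ∧ x = ∑ a ∈ S, u a (μ a)}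

/-- Subset Instability of the market outcome `(μ, τ)` with respect to utilities `u`. -/
noncomputable def instability (Mkt : TwoSidedMarket A) (u : A → A → ℝ)
    (μ : A → A) (τ : A → ℝ) : ℝ :=
  sSup {x | ∃ S : Finset A, x = maxWeight Mkt u S - ∑ a ∈ S, (u a (μ a) + τ a)}

theorem Finset.sum_le_sum_filter_univ {ι : Type*} [Fintype ι] {p : ι → Prop} [DecidablePred p]
    (S : Finset ι) {f g : ι → ℝ} (hf : ∀ a, ¬ p a → f a = 0) (hf₀ : ∀ a, p a → 0 ≤ f a)
    (hfg : ∀ a, p a → f a ≤ g a) :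
    ∑ a ∈ S, f a ≤ ∑ a ∈ univ.filter p, g a :=
  calc ∑ a ∈ S, f a = ∑ a ∈ S.filter p, f a :=
        (sum_filter_of_ne fun a _ hfa => not_not.mp (mt (hf a) hfa)).symm
    _ ≤ ∑ a ∈ univ.filter p, f a :=
        sum_le_sum_of_subset_of_nonneg (filter_subset_filter p (subset_univ S))
          fun a ha _ => hf₀ a (mem_filter.mp ha).2
    _ ≤ ∑ a ∈ univ.filter p, g a := sum_le_sum fun a ha => hfg a (mem_filter.mp ha).2

theorem IsCompact.sSup_sub_mem_Icc {C : Set ℝ} (hC : IsCompact C) {x : ℝ} (hx : x ∈ C) :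
    sSup C - x ∈ Set.Icc 0 (sSup C - sInf C) :=
  ⟨sub_nonneg.mpr (le_csSup hC.bddAbove hx), sub_le_sub_left (csInf_le hC.bddBelow hx) _⟩

theorem isMatchingOn_id (Mkt : TwoSidedMarket A) (S : Finset A) :
    IsMatchingOn Mkt S id :=
  ⟨fun _ => rfl, fun _ h => absurd rfl h, fun _ h => absurd rfl h⟩

section Matching

variable {Mkt : TwoSidedMarket A} {S : Finset A} {μ : A → A}

theorem IsMatchingOn.mem (hμ : IsMatchingOn Mkt S μ) {a : A} (ha : a ∈ S) : μ a ∈ S := by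
  by_cases h : μ a = a
  · rwa [h]
  · exact hμ.2.1 _ fun e => h (by rw [← e, hμ.1 a])

theorem IsMatchingOn.sum_comp {β : Type*} [AddCommMonoid β] (hμ : IsMatchingOn Mkt S μ)
    (f : A → β) : ∑ a ∈ S, f (μ a) = ∑ a ∈ S, f a :=
  sum_nbij' μ μ (fun _ => hμ.mem) (fun _ => hμ.mem) (fun a _ => hμ.1 a) (fun a _ => hμ.1 a)
    fun _ _ => rfl

end Matching

theorem maxWeight_le {Mkt : TwoSidedMarket A} {u : A → A → ℝ} {S : Finset A} {c : ℝ}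
    (h : ∀ μ, IsMatchingOn Mkt S μ → ∑ a ∈ S, u a (μ a) ≤ c) : maxWeight Mkt u S ≤ c :=
  csSup_le ⟨_, id, isMatchingOn_id Mkt S, rfl⟩ fun _ ⟨μ, hμ, hx⟩ => hx ▸ h μ hμ

theorem instability_le {Mkt : TwoSidedMarket A} {u : A → A → ℝ} {μ : A → A} {τ : A → ℝ}
    {c : ℝ} (h : ∀ S, maxWeight Mkt u S ≤ ∑ a ∈ S, (u a (μ a) + τ a) + c) :
    instability Mkt u μ τ ≤ c :=
  csSup_le ⟨_, ∅, rfl⟩ fun _ ⟨S, hx⟩ => hx ▸ sub_le_iff_le_add'.mpr (h S)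

/-- Sum the no-blocking-pair inequality over the pairs `{a, μ' a}`: each side of the
resulting inequality counts every agent of `S` twice. -/
theorem Stable.sum_le_of_isMatchingOn {Mkt : TwoSidedMarket A} {v : A → A → ℝ} {μ : A → A}
    {τ : A → ℝ} (hst : Stable Mkt v μ τ) (hv : ∀ a, v a a = 0) {S : Finset A} {μ' : A → A}
    (hμ' : IsMatchingOn Mkt S μ') :
    ∑ a ∈ S, v a (μ' a) ≤ ∑ a ∈ S, (v a (μ a) + τ a) := by
  set payoff := fun a => v a (μ a) + τ a
  have pair : ∀ a, v a (μ' a) + v (μ' a) (μ' (μ' a)) ≤ payoff a + payoff (μ' a) := by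
    intro a
    rw [hμ'.1 a]
    by_cases h : μ' a = a
    · rw [h, hv]
      linarith [hst.1 a]
    · rcases hμ'.2.2 a h with ⟨ha, hb⟩ | ⟨ha, hb⟩
      · exact hst.2 a ha _ hb
      · linarith [hst.2 _ hb a ha]
  have hsum := sum_le_sum fun a (_ : a ∈ S) => pair a
  rw [sum_add_distrib, sum_add_distrib, hμ'.sum_comp (fun b => v b (μ' b)),
    hμ'.sum_comp payoff] at hsum
  linarith

theorem instability_le_confidence_widths_general
    (Mkt : TwoSidedMarket A) (u v : A → A → ℝ) (μ : A → A) (τ : A → ℝ)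
    (C : A → A → Set ℝ)
    (hC : ∀ a a', (C a a').Nonempty ∧ IsCompact (C a a'))
    (hmem : ∀ m ∈ Mkt.M, ∀ w ∈ Mkt.W, u m w ∈ C m w ∧ u w m ∈ C w m)
    (hu : ∀ a, u a a = 0)
    (hv : ∀ a a', a ≠ a' → v a a' = sSup (C a a'))
    (hvdiag : ∀ a, v a a = 0)
    (hμ : IsMatchingOn Mkt Finset.univ μ)
    (hstable : Stable Mkt v μ τ) :
    instability Mkt u μ τ ≤
      ∑ a ∈ Finset.univ.filter (fun a => μ a ≠ a),
        (sSup (C a (μ a)) - sInf (C a (μ a))) := by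
  have gap : ∀ a b, a ≠ b → (a ∈ Mkt.M ∧ b ∈ Mkt.W) ∨ (a ∈ Mkt.W ∧ b ∈ Mkt.M) →
      v a b - u a b ∈ Set.Icc 0 (sSup (C a b) - sInf (C a b)) := by
    intro a b hab hcross
    rw [hv a b hab]
    refine (hC a b).2.sSup_sub_mem_Icc ?_
    rcases hcross with ⟨ha, hb⟩ | ⟨ha, hb⟩
    exacts [(hmem a ha b hb).1, (hmem b hb a ha).2]
  refine instability_le fun S => maxWeight_le fun μ' hμ' => ?_
  calc ∑ a ∈ S, u a (μ' a) ≤ ∑ a ∈ S, v a (μ' a) := sum_le_sum fun a _ => by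
        by_cases h : μ' a = a
        · rw [h, hu, hvdiag]
        · linarith [(gap a _ (Ne.symm h) (hμ'.2.2 a h)).1]
    _ ≤ ∑ a ∈ S, (v a (μ a) + τ a) := hstable.sum_le_of_isMatchingOn hvdiag hμ'
    _ = ∑ a ∈ S, (u a (μ a) + τ a) + ∑ a ∈ S, (v a (μ a) - u a (μ a)) := by
        rw [← sum_add_distrib]
        exact sum_congr rfl fun a _ => by ring
    _ ≤ _ := by
        gcongr
        refine S.sum_le_sum_filter_univ (fun a h => ?_)
          (fun a h => (gap a _ (Ne.symm h) (hμ.2.2 a h)).1)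
          (fun a h => (gap a _ (Ne.symm h) (hμ.2.2 a h)).2)
        rw [not_not.mp h, hu, hvdiag, sub_zero]

/-- if confidence sets contain the true utilities and `(X, τ)` is stable
with respect to the upper-confidence-bound utilities, then the Subset Instability with
respect to the true utilities is at most the total width of the confidence sets along `X`. -/
theorem instability_le_confidence_widths
    (Mkt : TwoSidedMarket A) (u v : A → A → ℝ) (μ : A → A) (τ : A → ℝ)
    (C : A → A → Set ℝ)
    (hC : ∀ a a', (C a a').Nonempty ∧ IsCompact (C a a'))
    (hmem : ∀ m ∈ Mkt.M, ∀ w ∈ Mkt.W, u m w ∈ C m w ∧ u w m ∈ C w m)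
    (hu : ∀ a, u a a = 0)
    (hv : ∀ a a', a ≠ a' → v a a' = sSup (C a a'))
    (hvdiag : ∀ a, v a a = 0)
    (hμ : IsMatchingOn Mkt Finset.univ μ)
    (hτ : ZeroSum μ τ)
    (hstable : Stable Mkt v μ τ) :
    instability Mkt u μ τ ≤
      ∑ a ∈ Finset.univ.filter (fun a => μ a ≠ a),
        (sSup (C a (μ a)) - sInf (C a (μ a))) :=
  instability_le_confidence_widths_general Mkt u v μ τ C hC hmem hu hv hvdiag hμ hstable
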